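/- Let A₁, A₂ be finite subsets of ℝ with |A₁| ≤ |A₂|, and let Z be a finite subset of ℝ. For z ∈ ℝ set r(z) = #{(a₁,a₁′,a₂,a₂′) ∈ A₁ × A₁ × A₂ × A₂ : a₁′ + a₂′ = z(a₁ + a₂)}. Then there exist absolute constants C > 0 and c ≥ 0 such that ∑_{z ∈ Z} r(z) ≤ C·(|Z|^{1/2}·|A₁|^{5/3}·|A₂|^{4/3} + |Z|^{2/3}·|A₁|^{4/3}·|A₂|^{4/3} + |Z|·|A₁|²)·(log(2+|A₂|))^c. -/

import Mathlib

open Finset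

/-- `rQ A₁ A₂ z` counts quadruples `(a₁,a₁′,a₂,a₂′) ∈ A₁×A₁×A₂×A₂` with
`a₁′ + a₂′ = z(a₁ + a₂)`. -/
noncomputable def rQ (A₁ A₂ : Finset ℝ) (z : ℝ) : ℕ :=
  (((A₁ ×ˢ A₁) ×ˢ (A₂ ×ˢ A₂)).filter (fun p =>
    p.1.2 + p.2.2 = z * (p.1.1 + p.2.1))).card

/-!
Writing `a₁′ - z a₁ = c = (-a₂′) - z (-a₂)`, `r(z) = ∑_c k(z, c) w(z, c)`, where `k` and `w`
count the points of `A₁ × A₁` and of `(-A₂) × (-A₂)` on the line `y = z x + c`. Pigeonholing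
`k ≈ 2^i` and `w ≈ 2^j` dyadically costs `log² |A₂|` and leaves a family of `N` lines with slopes
in `Z` subject to `2^i N ≤ |Z| |A₁|²` (lines of equal slope are disjoint) and to the
Szemerédi–Trotter bound `N K³ ≲ |X|⁴` for `K`-rich lines through a grid `X × X`, applied to both
grids. Multiplying suitable powers of these three inequalities gives the three terms of the bound.

The grid Szemerédi–Trotter bound is elementary: cut `X × X` into cells of `q ≈ |X| / K`
consecutive elements per side. A line meets at most `≈ 2 |X| / q ≤ K / 2` cells, so by
Cauchy–Schwarz it has `≳ K² q / |X|` pairs of distinct points in a common cell; distinct lines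
share no such pair, and there are at most `|X|² q²` pairs in common cells.
-/

open scoped Pointwise

noncomputable def linePoints (X : Finset ℝ) (l : ℝ × ℝ) : Finset (ℝ × ℝ) :=
  {p ∈ X ×ˢ X | p.2 = l.1 * p.1 + l.2}

@[simp]
lemma mem_linePoints {X : Finset ℝ} {l p : ℝ × ℝ} :
    p ∈ linePoints X l ↔ (p.1 ∈ X ∧ p.2 ∈ X) ∧ p.2 = l.1 * p.1 + l.2 := by
  simp [linePoints]

lemma card_linePoints_le (X : Finset ℝ) (l : ℝ × ℝ) : #(linePoints X l) ≤ #X :=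
  card_le_card_of_injOn Prod.fst (fun p hp => (mem_linePoints.1 hp).1.1)
    fun p hp p' hp' h => Prod.ext h <| by
      rw [(mem_linePoints.1 hp).2, (mem_linePoints.1 hp').2, h]

lemma eq_of_mem_linePoints {X : Finset ℝ} {l l' p p' : ℝ × ℝ} (hpp' : p ≠ p')
    (hp : p ∈ linePoints X l) (hp' : p' ∈ linePoints X l)
    (hpl' : p ∈ linePoints X l') (hp'l' : p' ∈ linePoints X l') : l = l' := by
  simp only [mem_linePoints] at hp hp' hpl' hp'l'
  have hx : p.1 ≠ p'.1 := fun h => hpp' (Prod.ext h (by rw [hp.2, hp'.2, h]))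
  have hz : l.1 = l'.1 := by
    have : (l.1 - l'.1) * (p.1 - p'.1) = 0 := by linarith [hp.2, hp'.2, hpl'.2, hp'l'.2]
    simpa [sub_eq_zero, hx] using this
  rw [hz] at hp
  exact Prod.ext hz (by linarith [hp.2, hpl'.2])

lemma sum_card_linePoints_le {X Z : Finset ℝ} {L : Finset (ℝ × ℝ)} (hL : ∀ l ∈ L, l.1 ∈ Z) :
    ∑ l ∈ L, #(linePoints X l) ≤ #Z * #X ^ 2 := by
  rw [← sum_fiberwise_of_maps_to hL, ← smul_eq_mul, ← sum_const]
  refine sum_le_sum fun z _ => ?_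
  rw [← card_biUnion]
  · calc _ ≤ #(X ×ˢ X) := card_le_card <| biUnion_subset.2 fun l _ => filter_subset _ _
      _ = #X ^ 2 := by rw [card_product, sq]
  · intro l hl l' hl' hne
    have hz : l.1 = l'.1 := (mem_filter.1 hl).2.trans (mem_filter.1 hl').2.symm
    refine disjoint_left.2 fun p hp hp' => hne ?_
    simp only [mem_linePoints, hz] at hp hp'
    exact Prod.ext hz (by linarith [hp.2, hp'.2])

lemma rQ_eq_sum (A₁ A₂ : Finset ℝ) (z : ℝ) :
    rQ A₁ A₂ z = ∑ c ∈ (A₁ ×ˢ A₁).image (fun p => p.2 - z * p.1),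
      #(linePoints A₁ (z, c)) * #(linePoints (-A₂) (z, c)) := by
  have hfiber (p : ℝ × ℝ) : #{q ∈ A₂ ×ˢ A₂ | p.2 + q.2 = z * (p.1 + q.1)}
      = #(linePoints (-A₂) (z, p.2 - z * p.1)) := by
    refine card_nbij' (fun q => (-q.1, -q.2)) (fun q => (-q.1, -q.2)) ?_ ?_ ?_ ?_
    · intro q hq
      simp only [coe_filter, mem_product, Set.mem_ofPred_eq] at hq
      simp only [mem_coe, mem_linePoints, mem_neg', neg_neg]
      exact ⟨hq.1, by linarith [hq.2]⟩
    · intro q hq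
      simp only [mem_coe, mem_linePoints, mem_neg'] at hq
      simp only [coe_filter, mem_product, Set.mem_ofPred_eq]
      exact ⟨hq.1, by linarith [hq.2]⟩
    all_goals intro q _; simp
  calc rQ A₁ A₂ z
      = ∑ p ∈ A₁ ×ˢ A₁, #(linePoints (-A₂) (z, p.2 - z * p.1)) := by
        simp only [rQ, card_filter, sum_product (s := A₁ ×ˢ A₁), ← hfiber]
    _ = _ := (sum_comp (fun c => #(linePoints (-A₂) (z, c))) _).trans <|
        sum_congr rfl fun c _ => by
        rw [smul_eq_mul, linePoints]
        congr 2
        exact filter_congr fun p _ => by constructor <;> intro h <;> linarith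

lemma sq_card_le_card_image_mul_card_filter {α γ : Type*} [DecidableEq γ] (s : Finset α)
    (f : α → γ) : #s ^ 2 ≤ #(s.image f) * #{pq ∈ s ×ˢ s | f pq.1 = f pq.2} := by
  have hpairs : #{pq ∈ s ×ˢ s | f pq.1 = f pq.2} = ∑ b ∈ s.image f, #{a ∈ s | f a = b} ^ 2 := by
    rw [card_eq_sum_card_fiberwise (f := fun pq => f pq.1) (t := s.image f)]
    · refine sum_congr rfl fun b _ => ?_
      rw [sq, ← card_product]
      congr 1
      ext pq
      simp only [mem_filter, mem_product]
      constructor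
      · rintro ⟨⟨⟨h1, h2⟩, h⟩, rfl⟩
        exact ⟨⟨h1, rfl⟩, h2, h.symm⟩
      · rintro ⟨⟨h1, rfl⟩, h2, h⟩
        exact ⟨⟨⟨h1, h2⟩, h.symm⟩, rfl⟩
    · intro pq hpq
      exact mem_image_of_mem f (mem_product.1 (mem_filter.1 hpq).1).1
  rw [card_eq_sum_card_image f s, hpairs]
  exact sq_sum_le_card_mul_sum_sq

noncomputable def sameCellPairs (β : ℝ → ℕ) (X : Finset ℝ) (l : ℝ × ℝ) :
    Finset ((ℝ × ℝ) × (ℝ × ℝ)) :=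
  {pq ∈ linePoints X l ×ˢ linePoints X l | Prod.map β β pq.1 = Prod.map β β pq.2 ∧ pq.1 ≠ pq.2}

section Cells

variable {β : ℝ → ℕ} {X : Finset ℝ}

lemma card_image_linePoints_le (hβ : Monotone β) {M : ℕ} (hM : ∀ x ∈ X, β x ≤ M)
    (l : ℝ × ℝ) : #((linePoints X l).image (Prod.map β β)) ≤ 2 * M + 1 := by
  -- along a line both cell indices move monotonically, so `σ` separates the cells it meets
  let σ : ℕ × ℕ → ℕ := fun e => if 0 ≤ l.1 then e.1 + e.2 else e.1 + (M - e.2)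
  have hsep : ∀ p ∈ linePoints X l, ∀ p' ∈ linePoints X l, p.1 ≤ p'.1 →
      σ (Prod.map β β p) = σ (Prod.map β β p') → Prod.map β β p = Prod.map β β p' := by
    intro p hp p' hp' hle hσ
    simp only [mem_linePoints] at hp hp'
    have h1 := hβ hle
    have h2 := hM _ hp.1.2
    have h3 := hM _ hp'.1.2
    by_cases hz : 0 ≤ l.1
    · have := hβ (show p.2 ≤ p'.2 by nlinarith [hp.2, hp'.2])
      simp only [σ, if_pos hz, Prod.map] at hσ ⊢
      ext <;> simp only <;> omega
    · have := hβ (show p'.2 ≤ p.2 by nlinarith [hp.2, hp'.2])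
      simp only [σ, if_neg hz, Prod.map] at hσ ⊢
      ext <;> simp only <;> omega
  calc #((linePoints X l).image (Prod.map β β))
      ≤ #(range (2 * M + 1)) := by
        refine card_le_card_of_injOn σ ?_ ?_
        · simp only [Set.MapsTo, coe_image, Set.mem_image, mem_coe, forall_exists_index, and_imp,
            forall_apply_eq_imp_iff₂, mem_range]
          intro p hp
          simp only [mem_linePoints] at hp
          have := hM _ hp.1.1
          have := hM _ hp.1.2
          simp only [σ, Prod.map]
          split <;> omega
        · simp only [Set.InjOn, coe_image, Set.mem_image, mem_coe, forall_exists_index, and_imp,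
            forall_apply_eq_imp_iff₂]
          intro p hp p' hp' h
          rcases le_total p.1 p'.1 with hle | hle
          · exact hsep p hp p' hp' hle h
          · exact (hsep p' hp' p hp hle h.symm).symm
    _ = 2 * M + 1 := card_range _

lemma sq_card_linePoints_le (hβ : Monotone β) {M : ℕ} (hM : ∀ x ∈ X, β x ≤ M) (l : ℝ × ℝ)
    (hl : 2 * (2 * M + 1) ≤ #(linePoints X l)) :
    #(linePoints X l) ^ 2 ≤ 2 * (2 * M + 1) * #(sameCellPairs β X l) := by
  set P := linePoints X l
  have hpairs : #{pq ∈ P ×ˢ P | Prod.map β β pq.1 = Prod.map β β pq.2}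
      ≤ #P + #(sameCellPairs β X l) := by
    rw [← diag_card P]
    refine (card_le_card fun pq hpq => ?_).trans (card_union_le _ _)
    rw [mem_filter] at hpq
    by_cases h : pq.1 = pq.2
    · exact mem_union_left _ (mem_diag.2 ⟨mem_product.1 hpq.1 |>.1, h⟩)
    · exact mem_union_right _ (mem_filter.2 ⟨hpq.1, hpq.2, h⟩)
  have := (sq_card_le_card_image_mul_card_filter P (Prod.map β β)).trans <|
    Nat.mul_le_mul (card_image_linePoints_le hβ hM l) hpairs
  nlinarith

lemma sameCellPairs_subset (l : ℝ × ℝ) :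
    sameCellPairs β X l ⊆ {pq ∈ (X ×ˢ X) ×ˢ (X ×ˢ X) | Prod.map β β pq.1 = Prod.map β β pq.2} := by
  intro pq hpq
  simp only [sameCellPairs, mem_filter, mem_product, mem_linePoints] at hpq ⊢
  exact ⟨⟨hpq.1.1.1, hpq.1.2.1⟩, hpq.2.1⟩

lemma disjoint_sameCellPairs {l l' : ℝ × ℝ} (hne : l ≠ l') :
    Disjoint (sameCellPairs β X l) (sameCellPairs β X l') := by
  refine disjoint_left.2 fun pq hpq hpq' => hne ?_
  simp only [sameCellPairs, mem_filter, mem_product] at hpq hpq'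
  exact eq_of_mem_linePoints hpq.2.2 hpq.1.1 hpq.1.2 hpq'.1.1 hpq'.1.2

lemma card_sameCell_le {q : ℕ} (hq : ∀ i, #{x ∈ X | β x = i} ≤ q) :
    #{pq ∈ (X ×ˢ X) ×ˢ (X ×ˢ X) | Prod.map β β pq.1 = Prod.map β β pq.2} ≤ #X ^ 2 * q ^ 2 := by
  let cell (p : ℝ × ℝ) := {x ∈ X | β x = β p.1} ×ˢ {y ∈ X | β y = β p.2}
  calc _ ≤ #((X ×ˢ X).biUnion fun p => {p} ×ˢ cell p) := by
        refine card_le_card fun pq hpq => ?_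
        simp only [mem_filter, mem_product, Prod.map, Prod.mk.injEq] at hpq
        simp only [mem_biUnion, mem_product, mem_singleton, mem_filter, cell]
        exact ⟨pq.1, ⟨hpq.1.1.1, hpq.1.1.2⟩, rfl, ⟨hpq.1.2.1, hpq.2.1.symm⟩, hpq.1.2.2,
          hpq.2.2.symm⟩
    _ ≤ ∑ p ∈ X ×ˢ X, #({p} ×ˢ cell p) := card_biUnion_le
    _ ≤ ∑ _p ∈ X ×ˢ X, q ^ 2 := sum_le_sum fun p _ => by
        rw [card_product, card_product, card_singleton, one_mul, sq]
        exact Nat.mul_le_mul (hq _) (hq _)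
    _ = #X ^ 2 * q ^ 2 := by rw [sum_const, card_product, smul_eq_mul]; ring

lemma card_mul_sq_le (hβ : Monotone β) {M q K : ℕ} (hM : ∀ x ∈ X, β x ≤ M)
    (hq : ∀ i, #{x ∈ X | β x = i} ≤ q) (hK : 2 * (2 * M + 1) ≤ K) {L : Finset (ℝ × ℝ)}
    (hL : ∀ l ∈ L, K ≤ #(linePoints X l)) :
    #L * K ^ 2 ≤ 2 * (2 * M + 1) * (#X ^ 2 * q ^ 2) := by
  calc #L * K ^ 2 = ∑ _l ∈ L, K ^ 2 := by rw [sum_const, smul_eq_mul]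
    _ ≤ ∑ l ∈ L, 2 * (2 * M + 1) * #(sameCellPairs β X l) := sum_le_sum fun l hl =>
        (Nat.pow_le_pow_left (hL l hl) 2).trans
          (sq_card_linePoints_le hβ hM l (hK.trans (hL l hl)))
    _ = 2 * (2 * M + 1) * #(L.biUnion (sameCellPairs β X)) := by
        rw [← mul_sum, card_biUnion fun l _ l' _ => disjoint_sameCellPairs]
    _ ≤ 2 * (2 * M + 1) * (#X ^ 2 * q ^ 2) := Nat.mul_le_mul_left _ <|
        (card_le_card (biUnion_subset.2 fun l _ => sameCellPairs_subset l)).trans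
          (card_sameCell_le hq)

end Cells

noncomputable def rankIn (X : Finset ℝ) (x : ℝ) : ℕ := #{t ∈ X | t < x}

lemma rankIn_mono (X : Finset ℝ) : Monotone (rankIn X) := fun _ _ hxy =>
  card_le_card <| monotone_filter_right X fun _ _ h => h.trans_le hxy

lemma rankIn_lt_card {X : Finset ℝ} {x : ℝ} (hx : x ∈ X) : rankIn X x < #X :=
  card_lt_card <| filter_ssubset.2 ⟨x, hx, lt_irrefl x⟩

lemma rankIn_strictMonoOn (X : Finset ℝ) : StrictMonoOn (rankIn X) X := fun x hx _ _ hxy =>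
  card_lt_card <| ssubset_iff_of_subset (monotone_filter_right X fun _ _ h => h.trans hxy) |>.2
    ⟨x, by simpa [hxy] using hx, by simp⟩

lemma card_filter_rankIn_div_eq_le (X : Finset ℝ) {q : ℕ} (hq : 0 < q) (i : ℕ) :
    #{x ∈ X | rankIn X x / q = i} ≤ q := by
  calc #{x ∈ X | rankIn X x / q = i} ≤ #(Ico (i * q) (i * q + q)) := by
        refine card_le_card_of_injOn (rankIn X) (fun x hx => ?_) ?_
        · rw [coe_filter, Set.mem_ofPred_eq, Nat.div_eq_iff hq] at hx
          rw [mem_coe, mem_Ico]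
          omega
        · exact (rankIn_strictMonoOn X).injOn.mono (filter_subset _ X)
    _ = q := by rw [Nat.card_Ico]; omega

-- The Szemerédi–Trotter bound for lines through a Cartesian product.
lemma card_mul_pow_three_le {X : Finset ℝ} {L : Finset (ℝ × ℝ)} {K : ℕ} (hK : 2 ≤ K)
    (hL : ∀ l ∈ L, K ≤ #(linePoints X l)) : #L * K ^ 3 ≤ 49 * #X ^ 4 := by
  obtain rfl | ⟨l₀, hl₀⟩ := L.eq_empty_or_nonempty
  · simp
  set n := #X
  have hKn : K ≤ n := (hL l₀ hl₀).trans (card_linePoints_le X l₀)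
  -- cells of `q ≈ 6n / K` consecutive elements per side: a line meets at most `K / 2` of them
  set q := 6 * n / K + 1
  set M := (n - 1) / q
  have hq : 0 < q := Nat.succ_pos _
  have hqK : q * K ≤ 7 * n := by
    have := Nat.div_mul_le_self (6 * n) K
    rw [add_mul, one_mul]
    omega
  have hMK : 6 * M < K := by
    have h1 : 6 * n < q * K := by
      have := Nat.lt_div_mul_add (a := 6 * n) (show 0 < K by omega)
      rw [add_mul, one_mul]
      omega
    have h2 : M * q ≤ n - 1 := Nat.div_mul_le_self _ _
    refine Nat.lt_of_mul_lt_mul_right (a := q) ?_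
    rw [mul_assoc, mul_comm K]
    omega
  have hLK := card_mul_sq_le (M := M) (K := K)
    (fun _ _ h => Nat.div_le_div_right (rankIn_mono X h))
    (fun x hx => Nat.div_le_div_right (Nat.le_sub_one_of_lt (rankIn_lt_card hx)))
    (card_filter_rankIn_div_eq_le X hq) (by omega) hL
  refine Nat.le_of_mul_le_mul_right (c := K) ?_ (by omega)
  calc #L * K ^ 3 * K = #L * K ^ 2 * K ^ 2 := by ring
    _ ≤ 2 * (2 * M + 1) * (n ^ 2 * q ^ 2) * K ^ 2 := Nat.mul_le_mul_right _ hLK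
    _ = 2 * (2 * M + 1) * (n ^ 2 * (q * K) ^ 2) := by ring
    _ ≤ K * (n ^ 2 * (7 * n) ^ 2) := by gcongr; omega
    _ = 49 * n ^ 4 * K := by ring

lemma rpow_pow_of_mul_eq {x : ℝ} (hx : 0 ≤ x) {p : ℝ} {n k : ℕ} (h : p * n = k) :
    (x ^ p) ^ n = x ^ k := by
  rw [← Real.rpow_mul_natCast hx, h, Real.rpow_natCast]

noncomputable def levelBound (m a b : ℝ) : ℝ :=
  m ^ ((1 : ℝ) / 2) * a ^ ((5 : ℝ) / 3) * b ^ ((4 : ℝ) / 3)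
    + m ^ ((2 : ℝ) / 3) * a ^ ((4 : ℝ) / 3) * b ^ ((4 : ℝ) / 3) + m * a ^ 2

lemma levelBound_nonneg (m a b : ℕ) : 0 ≤ levelBound m a b := by
  unfold levelBound; positivity

lemma cast_mul_le_of_cube_le {m a b y N : ℕ} (h₁ : N ≤ m * a ^ 2) (h₃ : N * y ^ 3 ≤ 49 * b ^ 4) :
    ((y * N : ℕ) : ℝ) ≤ 4 * ((m : ℝ) ^ ((2 : ℝ) / 3) * (a : ℝ) ^ ((4 : ℝ) / 3) *
      (b : ℝ) ^ ((4 : ℝ) / 3)) := by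
  have hpow : (y * N) ^ 3 ≤ 64 * (m ^ 2 * a ^ 4 * b ^ 4) := by
    calc (y * N) ^ 3 = N ^ 2 * (N * y ^ 3) := by ring
      _ ≤ (m * a ^ 2) ^ 2 * (49 * b ^ 4) := by gcongr
      _ ≤ 64 * (m ^ 2 * a ^ 4 * b ^ 4) := by nlinarith [Nat.zero_le (m ^ 2 * a ^ 4 * b ^ 4)]
  refine le_of_pow_le_pow_left₀ (n := 3) (by norm_num) (by positivity) ?_
  rw [mul_pow, mul_pow, mul_pow, rpow_pow_of_mul_eq m.cast_nonneg (k := 2) (by norm_num),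
    rpow_pow_of_mul_eq a.cast_nonneg (k := 4) (by norm_num),
    rpow_pow_of_mul_eq b.cast_nonneg (k := 4) (by norm_num)]
  exact_mod_cast hpow

lemma cast_mul_le_of_sixth_le {m a b x y N : ℕ} (h₁ : x * N ≤ m * a ^ 2)
    (h₂ : N * x ^ 3 ≤ 49 * a ^ 4) (h₃ : N * y ^ 3 ≤ 49 * b ^ 4) :
    ((x * y * N : ℕ) : ℝ) ≤ 7 * ((m : ℝ) ^ ((1 : ℝ) / 2) * (a : ℝ) ^ ((5 : ℝ) / 3) *
      (b : ℝ) ^ ((4 : ℝ) / 3)) := by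
  have hpow : (x * y * N) ^ 6 ≤ 7 ^ 6 * (m ^ 3 * a ^ 10 * b ^ 8) := by
    calc (x * y * N) ^ 6 = (x * N) ^ 3 * (N * x ^ 3) * (N * y ^ 3) ^ 2 := by ring
      _ ≤ (m * a ^ 2) ^ 3 * (49 * a ^ 4) * (49 * b ^ 4) ^ 2 := by gcongr
      _ = 7 ^ 6 * (m ^ 3 * a ^ 10 * b ^ 8) := by ring
  refine le_of_pow_le_pow_left₀ (n := 6) (by norm_num) (by positivity) ?_
  rw [mul_pow, mul_pow, mul_pow, rpow_pow_of_mul_eq m.cast_nonneg (k := 3) (by norm_num),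
    rpow_pow_of_mul_eq a.cast_nonneg (k := 10) (by norm_num),
    rpow_pow_of_mul_eq b.cast_nonneg (k := 8) (by norm_num)]
  exact_mod_cast hpow

-- `x` and `y` are the dyadic richness, in the two grids, of a family of `N` lines with `m` slopes.
lemma cast_mul_le_levelBound {m a b x y N : ℕ} (h₁ : x * N ≤ m * a ^ 2)
    (h₂ : x = 1 ∨ N * x ^ 3 ≤ 49 * a ^ 4) (h₃ : y = 1 ∨ N * y ^ 3 ≤ 49 * b ^ 4) :
    ((x * y * N : ℕ) : ℝ) ≤ 7 * levelBound m a b := by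
  have hT₁ : 0 ≤ (m : ℝ) ^ ((1 : ℝ) / 2) * (a : ℝ) ^ ((5 : ℝ) / 3) * (b : ℝ) ^ ((4 : ℝ) / 3) := by
    positivity
  have hT₂ : 0 ≤ (m : ℝ) ^ ((2 : ℝ) / 3) * (a : ℝ) ^ ((4 : ℝ) / 3) * (b : ℝ) ^ ((4 : ℝ) / 3) := by
    positivity
  have hT₃ : 0 ≤ (m : ℝ) * (a : ℝ) ^ 2 := by positivity
  unfold levelBound
  rcases h₃ with rfl | h₃
  · have : ((x * 1 * N : ℕ) : ℝ) ≤ m * a ^ 2 := by rw [mul_one]; exact_mod_cast h₁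
    linarith
  rcases h₂ with rfl | h₂
  · have := cast_mul_le_of_cube_le (by simpa using h₁) h₃
    rw [one_mul]
    linarith
  have := cast_mul_le_of_sixth_le h₁ h₂ h₃
  linarith

lemma pow_mul_pow_mul_card_le {A B Z : Finset ℝ} {L : Finset (ℝ × ℝ)} {i j : ℕ}
    (hZ : ∀ l ∈ L, l.1 ∈ Z) (hA : ∀ l ∈ L, 2 ^ i ≤ #(linePoints A l))
    (hB : ∀ l ∈ L, 2 ^ j ≤ #(linePoints B l)) :
    ((2 ^ i * 2 ^ j * #L : ℕ) : ℝ) ≤ 7 * levelBound #Z #A #B := by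
  have rich {X : Finset ℝ} {k : ℕ} (h : ∀ l ∈ L, 2 ^ k ≤ #(linePoints X l)) :
      2 ^ k = 1 ∨ #L * (2 ^ k) ^ 3 ≤ 49 * #X ^ 4 := by
    rcases k with _ | k
    · exact .inl rfl
    · exact .inr <| card_mul_pow_three_le (Nat.le_self_pow k.succ_ne_zero 2) h
  refine cast_mul_le_levelBound ?_ (rich hA) (rich hB)
  calc 2 ^ i * #L = ∑ _l ∈ L, 2 ^ i := by rw [sum_const, smul_eq_mul, mul_comm]
    _ ≤ ∑ l ∈ L, #(linePoints A l) := sum_le_sum hA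
    _ ≤ #Z * #A ^ 2 := sum_card_linePoints_le hZ

lemma le_sum_range_log_two {k a : ℕ} (hk : k ≤ a) :
    k ≤ ∑ i ∈ range (Nat.log 2 a + 1), if 2 ^ i ≤ k then 2 ^ i else 0 := by
  obtain rfl | hk₀ := Nat.eq_zero_or_pos k
  · exact Nat.zero_le _
  calc k ≤ 2 ^ (Nat.log 2 k + 1) - 1 := by
        have := Nat.lt_pow_succ_log_self one_lt_two k
        omega
    _ = ∑ i ∈ range (Nat.log 2 k + 1), 2 ^ i := by simp [Nat.geomSum_eq le_rfl]
    _ = ∑ i ∈ range (Nat.log 2 k + 1), if 2 ^ i ≤ k then 2 ^ i else 0 :=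
        sum_congr rfl fun i hi => (if_pos <|
          (Nat.pow_le_pow_right two_pos (Nat.lt_succ_iff.1 (mem_range.1 hi))).trans
            (Nat.pow_log_le_self 2 hk₀.ne')).symm
    _ ≤ _ := sum_le_sum_of_subset <| range_subset_range.2 <|
        Nat.succ_le_succ (Nat.log_mono_right hk)

lemma cast_sum_mul_le_dyadic {ι : Type*} {S : Finset ι} {f g : ι → ℕ} {a b : ℕ}
    (hf : ∀ l ∈ S, f l ≤ a) (hg : ∀ l ∈ S, g l ≤ b) {T : ℝ}
    (hT : ∀ i j, ((2 ^ i * 2 ^ j * #{l ∈ S | 2 ^ i ≤ f l ∧ 2 ^ j ≤ g l} : ℕ) : ℝ) ≤ T) :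
    ((∑ l ∈ S, f l * g l : ℕ) : ℝ) ≤ (Nat.log 2 a + 1) * (Nat.log 2 b + 1) * T := by
  have hsum : ∑ l ∈ S, f l * g l ≤ ∑ i ∈ range (Nat.log 2 a + 1), ∑ j ∈ range (Nat.log 2 b + 1),
      2 ^ i * 2 ^ j * #{l ∈ S | 2 ^ i ≤ f l ∧ 2 ^ j ≤ g l} := by
    calc ∑ l ∈ S, f l * g l
        ≤ ∑ l ∈ S, ∑ i ∈ range (Nat.log 2 a + 1), ∑ j ∈ range (Nat.log 2 b + 1),
            if 2 ^ i ≤ f l ∧ 2 ^ j ≤ g l then 2 ^ i * 2 ^ j else 0 := sum_le_sum fun l hl => by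
          simp only [← ite_zero_mul_ite_zero, ← sum_mul_sum]
          exact Nat.mul_le_mul (le_sum_range_log_two (hf l hl)) (le_sum_range_log_two (hg l hl))
      _ = _ := by
          rw [sum_comm]
          refine sum_congr rfl fun i _ => ?_
          rw [sum_comm]
          refine sum_congr rfl fun j _ => ?_
          rw [← sum_filter, sum_const, smul_eq_mul, mul_comm]
  calc ((∑ l ∈ S, f l * g l : ℕ) : ℝ)
      ≤ ∑ i ∈ range (Nat.log 2 a + 1), ∑ j ∈ range (Nat.log 2 b + 1),
          ((2 ^ i * 2 ^ j * #{l ∈ S | 2 ^ i ≤ f l ∧ 2 ^ j ≤ g l} : ℕ) : ℝ) := by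
        exact_mod_cast hsum
    _ ≤ ∑ _i ∈ range (Nat.log 2 a + 1), ∑ _j ∈ range (Nat.log 2 b + 1), T := by
        gcongr with i _ j _
        exact hT i j
    _ = (Nat.log 2 a + 1) * (Nat.log 2 b + 1) * T := by simp; ring

lemma natLog_two_add_one_le {a b : ℕ} (hab : a ≤ b) :
    (Nat.log 2 a + 1 : ℝ) ≤ 3 * Real.log (2 + b) := by
  have hpow : (2 : ℝ) ^ (Nat.log 2 a + 1) ≤ (2 + b) ^ 2 := by
    have : ((2 ^ Nat.log 2 a : ℕ) : ℝ) ≤ b + 1 := by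
      exact_mod_cast (Nat.pow_log_le_add_one 2 a).trans (Nat.succ_le_succ hab)
    push_cast at this
    rw [pow_succ]
    nlinarith
  have hlog := Real.log_le_log (by positivity) hpow
  rw [Real.log_pow, Real.log_pow] at hlog
  have := Real.log_two_gt_d9
  have : 0 ≤ Real.log (2 + b) := Real.log_nonneg (by linarith [b.cast_nonneg (α := ℝ)])
  push_cast at hlog
  nlinarith

theorem sum_r_asymmetric_bound :
    ∃ C c : ℝ, 0 < C ∧ 0 ≤ c ∧
      ∀ A₁ A₂ Z : Finset ℝ, A₁.card ≤ A₂.card →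
        (∑ z ∈ Z, (rQ A₁ A₂ z : ℝ)) ≤
          C * ((Z.card : ℝ) ^ ((1 : ℝ) / 2) * (A₁.card : ℝ) ^ ((5 : ℝ) / 3) *
                (A₂.card : ℝ) ^ ((4 : ℝ) / 3)
              + (Z.card : ℝ) ^ ((2 : ℝ) / 3) * (A₁.card : ℝ) ^ ((4 : ℝ) / 3) *
                (A₂.card : ℝ) ^ ((4 : ℝ) / 3)
              + (Z.card : ℝ) * (A₁.card : ℝ) ^ 2) *
            Real.log (2 + (A₂.card : ℝ)) ^ c := by
  refine ⟨63, 2, by norm_num, by norm_num, fun A₁ A₂ Z hA => ?_⟩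
  set U := Z.biUnion fun z => (A₁ ×ˢ A₁).image fun p => p.2 - z * p.1
  have hcount : ∑ z ∈ Z, rQ A₁ A₂ z
      ≤ ∑ l ∈ Z ×ˢ U, #(linePoints A₁ l) * #(linePoints (-A₂) l) := by
    rw [sum_product]
    exact sum_le_sum fun z hz => (rQ_eq_sum A₁ A₂ z).trans_le <|
      sum_le_sum_of_subset fun c hc => mem_biUnion.2 ⟨z, hz, hc⟩
  have hdyadic := cast_sum_mul_le_dyadic (S := Z ×ˢ U) (fun l _ => card_linePoints_le A₁ l)
    (fun l _ => card_linePoints_le (-A₂) l) (T := 7 * levelBound #Z #A₁ #A₂) fun i j => by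
      rw [← card_neg A₂]
      exact pow_mul_pow_mul_card_le (fun l hl => (mem_product.1 (mem_filter.1 hl).1).1)
        (fun l hl => (mem_filter.1 hl).2.1) (fun l hl => (mem_filter.1 hl).2.2)
  have hlog : (Nat.log 2 #A₁ + 1 : ℝ) * (Nat.log 2 #(-A₂) + 1) ≤ 9 * Real.log (2 + #A₂) ^ 2 := by
    have := natLog_two_add_one_le hA
    have := natLog_two_add_one_le (card_neg A₂).le
    nlinarith
  calc ∑ z ∈ Z, (rQ A₁ A₂ z : ℝ)
      ≤ ((∑ l ∈ Z ×ˢ U, #(linePoints A₁ l) * #(linePoints (-A₂) l) : ℕ) : ℝ) := by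
        exact_mod_cast hcount
    _ ≤ 9 * Real.log (2 + #A₂) ^ 2 * (7 * levelBound #Z #A₁ #A₂) :=
        hdyadic.trans <| mul_le_mul_of_nonneg_right hlog <|
          mul_nonneg (by norm_num) (levelBound_nonneg _ _ _)
    _ = _ := by rw [Real.rpow_two, levelBound]; ring
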